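/- Let A be a SAW*-algebra and (\phi_n) a sequence of states on A for which there exists a sequence (a_n) of pairwise orthogonal positive elements with \|a_n\| = \phi_n(a_n) = 1 and \phi_n(a_m) = 0 for m \ne n. Then the weak*-closure of \{\phi_n : n \in \mathbb{N}\} in the dual of A is homeomorphic to \beta\mathbb{N}, the Stone-Cech compactification of \mathbb{N}. -/

import Mathlib

/-!
The map `n ↦ φ n` extends to a continuous surjection `βℕ → closure {φ n}`. Two distinct points
of `βℕ` lie in the closures of `S` and `Sᶜ` for some `S ⊆ ℕ`, so the extension is injective as
soon as `{φ n | n ∈ S}` and `{φ n | n ∉ S}` have disjoint weak*-closures. Evaluation at an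
element `e` with `φ n e = 1` for `n ∈ S` and `φ n e = 0` for `n ∉ S` separates them. Such an `e`
is what the SAW* property gives for the orthogonal positive elements `∑_{n ∈ S} 2⁻ⁿ aₙ` and
`∑_{n ∉ S} 2⁻ⁿ aₙ`: by Cauchy–Schwarz, `φ n (y * a m) = 0` for `m ≠ n` and
`φ n (y * a n) = φ n y`, so `φ n (y * ∑_{m ∈ T} 2⁻ᵐ aₘ) = 2⁻ⁿ φ n y` for `n ∈ T`.
-/

open scoped ComplexOrder

/-- A C*-algebra is a SAW*-algebra if for any two orthogonal positive elements `x, y`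
there is a positive `e` with `e x = x` and `e y = 0`. -/
def IsSAWStar (A : Type*) [NonUnitalRing A] [PartialOrder A] : Prop :=
  ∀ x y : A, 0 ≤ x → 0 ≤ y → x * y = 0 → ∃ e : A, 0 ≤ e ∧ e * x = x ∧ e * y = 0

/-- A state, as an element of the weak* dual of a unital C*-algebra. -/
def IsState {A : Type*} [NormedRing A] [StarRing A] [NormedAlgebra ℂ A]
    (φ : WeakDual ℂ A) : Prop :=
  φ 1 = 1 ∧ ∀ x : A, 0 ≤ φ (star x * x)

open Set

theorem disjoint_closure_image_compl_of_continuous {ι X Y : Type*} [TopologicalSpace X]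
    [TopologicalSpace Y] [T1Space Y] {f : ι → X} {g : X → Y} (hg : Continuous g) {y₀ y₁ : Y}
    (hy : y₀ ≠ y₁) {S : Set ι} (h₀ : ∀ i ∈ S, g (f i) = y₀) (h₁ : ∀ i ∉ S, g (f i) = y₁) :
    Disjoint (closure (f '' S)) (closure (f '' Sᶜ)) := by
  have hsub {T : Set ι} {y : Y} (hT : ∀ i ∈ T, g (f i) = y) : closure (f '' T) ⊆ g ⁻¹' {y} :=
    closure_minimal (by rintro _ ⟨i, hi, rfl⟩; exact hT i hi) (isClosed_singleton.preimage hg)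
  exact ((disjoint_singleton.mpr hy).preimage g).mono (hsub h₀) (hsub h₁)

namespace StoneCech

variable {ι : Type*} [TopologicalSpace ι]

theorem exists_mem_closure_image_and_mem_closure_image_compl {p q : StoneCech ι} (hpq : p ≠ q) :
    ∃ S : Set ι, p ∈ closure (stoneCechUnit '' S) ∧ q ∈ closure (stoneCechUnit '' Sᶜ) := by
  obtain ⟨U, V, hU, hV, hpU, hqV, hUV⟩ := t2_separation hpq
  refine ⟨stoneCechUnit ⁻¹' U, ?_, ?_⟩
  · rw [image_preimage_eq_inter_range]
    exact denseRange_stoneCechUnit.open_subset_closure_inter hU hpU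
  · refine closure_mono ?_ (denseRange_stoneCechUnit.open_subset_closure_inter hV hqV)
    rintro _ ⟨hx, i, rfl⟩
    exact ⟨i, fun hi => hUV.ne_of_mem hi hx rfl, rfl⟩

variable {X : Type*} [TopologicalSpace X] [T2Space X]

theorem nonempty_homeomorph_closure_range {f : ι → X} (hf : Continuous f)
    (hK : IsCompact (closure (range f)))
    (hsep : ∀ S : Set ι, Disjoint (closure (f '' S)) (closure (f '' Sᶜ))) :
    Nonempty (StoneCech ι ≃ₜ closure (range f)) := by
  have : CompactSpace (closure (range f)) := isCompact_iff_compactSpace.mp hK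
  let f' : ι → closure (range f) := fun i => ⟨f i, subset_closure (mem_range_self i)⟩
  have hf' : Continuous f' := hf.subtype_mk _
  let g := stoneCechExtend hf'
  have hg : Continuous g := continuous_stoneCechExtend hf'
  have hgf : ∀ i, (g (stoneCechUnit i) : X) = f i := fun i =>
    congrArg Subtype.val (stoneCechExtend_stoneCechUnit hf' i)
  have hdense : DenseRange f' := Subtype.dense_iff.mpr (by rw [← range_comp]; rfl)
  have hsurj : Function.Surjective g := by
    have hsub : range f' ⊆ range g := by
      rintro _ ⟨i, rfl⟩
      exact ⟨stoneCechUnit i, stoneCechExtend_stoneCechUnit hf' i⟩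
    rw [← range_eq_univ, ← (isCompact_range hg).isClosed.closure_eq]
    exact (Dense.mono hsub hdense).closure_eq
  have hinj : Function.Injective g := by
    intro p q hpq
    by_contra hne
    obtain ⟨S, hp, hq⟩ := exists_mem_closure_image_and_mem_closure_image_compl hne
    have hG : Continuous fun z => (g z : X) := continuous_subtype_val.comp hg
    have hmap : ∀ T : Set ι, ∀ z ∈ closure (stoneCechUnit '' T), (g z : X) ∈ closure (f '' T) := by
      intro T z hz
      have := image_closure_subset_closure_image hG ⟨z, hz, rfl⟩
      rwa [← image_comp, Function.comp_def, funext hgf] at this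
    exact (hsep S).ne_of_mem (hmap S p hp) (hmap Sᶜ q hq) (by rw [hpq])
  exact ⟨hg.homeoOfEquivCompactToT2 (f := Equiv.ofBijective g ⟨hinj, hsurj⟩)⟩

end StoneCech

namespace IsState

variable {A : Type*} [CStarAlgebra A] [PartialOrder A] [StarOrderedRing A] {φ : WeakDual ℂ A}

theorem map_nonneg (hφ : IsState φ) {x : A} (hx : 0 ≤ x) : 0 ≤ φ x := by
  obtain ⟨y, rfl⟩ := CStarAlgebra.nonneg_iff_eq_star_mul_self.mp hx
  exact hφ.2 y

noncomputable def toPositiveLinearMap (hφ : IsState φ) : A →ₚ[ℂ] ℂ :=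
  .mk₀ (φ : A →L[ℂ] ℂ).toLinearMap fun _ => hφ.map_nonneg

@[simp]
theorem toPositiveLinearMap_apply (hφ : IsState φ) (x : A) : hφ.toPositiveLinearMap x = φ x :=
  rfl

theorem norm_apply_le (hφ : IsState φ) (x : A) : ‖φ x‖ ≤ 4 * ‖x‖ := by
  obtain ⟨y, hy_nonneg, hy_norm, hy⟩ := CStarAlgebra.exists_sum_four_nonneg x
  have hbound : ∀ i, ‖φ (y i)‖ ≤ ‖y i‖ := fun i => by
    simpa [hφ.1] using hφ.toPositiveLinearMap.norm_apply_le_of_nonneg _ (hy_nonneg i)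
  calc ‖φ x‖ ≤ ∑ i : Fin 4, ‖φ (y i)‖ := by
        rw [hy, map_sum]
        refine (norm_sum_le _ _).trans_eq ?_
        simp [map_smul]
    _ ≤ ∑ _i : Fin 4, ‖x‖ := Finset.sum_le_sum fun i _ => (hbound i).trans (hy_norm i)
    _ = 4 * ‖x‖ := by simp

theorem norm_toStrongDual_le (hφ : IsState φ) : ‖WeakDual.toStrongDual φ‖ ≤ 4 :=
  ContinuousLinearMap.opNorm_le_bound _ (by norm_num) hφ.norm_apply_le

theorem apply_star_mul_eq_zero (hφ : IsState φ) {b : A} (hb : φ (star b * b) = 0) (x : A) :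
    φ (star x * b) = 0 := by
  let f := hφ.toPositiveLinearMap
  have hb' : ‖f.toPreGNS b‖ = 0 := by
    rw [f.preGNS_norm_def]
    simp [f, hb]
  -- Cauchy–Schwarz for the GNS pre-inner product `⟪x, b⟫ = φ (star x * b)`
  have := norm_inner_le_norm (𝕜 := ℂ) (f.toPreGNS x) (f.toPreGNS b)
  rw [hb', mul_zero, norm_le_zero_iff, f.preGNS_inner_def] at this
  exact this

theorem apply_mul_eq_zero_of_apply_eq_zero (hφ : IsState φ) {b : A} (hb₀ : 0 ≤ b) (hb₁ : b ≤ 1)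
    (hφb : φ b = 0) (x : A) : φ (x * b) = 0 := by
  have hbb : b * b ≤ b := by
    simpa [sq] using CStarAlgebra.pow_antitone hb₀ hb₁ (show 1 ≤ 2 by norm_num)
  have hφbb : φ (star b * b) = 0 := by
    refine le_antisymm ?_ (hφ.2 b)
    rw [(IsSelfAdjoint.of_nonneg hb₀).star_eq]
    simpa [hφb] using hφ.map_nonneg (sub_nonneg.mpr hbb)
  simpa using hφ.apply_star_mul_eq_zero hφbb (star x)

theorem apply_mul_eq_of_apply_eq_one (hφ : IsState φ) {b : A} (hb₀ : 0 ≤ b) (hb₁ : b ≤ 1)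
    (hφb : φ b = 1) (x : A) : φ (x * b) = φ x := by
  have h := hφ.apply_mul_eq_zero_of_apply_eq_zero (sub_nonneg.mpr hb₁)
    (sub_le_self 1 hb₀) (by rw [map_sub, hφ.1, hφb, sub_self]) x
  rwa [mul_sub, mul_one, map_sub, sub_eq_zero, eq_comm] at h

end IsState

section DyadicSum

variable {E : Type*} [NormedAddCommGroup E] [NormedSpace ℝ E] [CompleteSpace E]

noncomputable def dyadicSum (a : ℕ → E) (T : Set ℕ) : E :=
  ∑' n, T.indicator (fun n => (2⁻¹ : ℝ) ^ n • a n) n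

theorem summable_dyadic {a : ℕ → E} (ha : ∀ n, ‖a n‖ ≤ 1) (T : Set ℕ) :
    Summable (T.indicator fun n => (2⁻¹ : ℝ) ^ n • a n) := by
  refine Summable.of_norm_bounded summable_geometric_two fun n => ?_
  by_cases hn : n ∈ T
  · rw [indicator_of_mem hn, norm_smul]
    simpa using mul_le_of_le_one_right (by positivity : (0 : ℝ) ≤ 2⁻¹ ^ n) (ha n)
  · simp [hn]

theorem dyadicSum_mul_dyadicSum_compl {R : Type*} [NormedRing R] [NormedAlgebra ℝ R]
    [CompleteSpace R] {a : ℕ → R} (ha : ∀ n, ‖a n‖ ≤ 1)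
    (horth : ∀ m n, m ≠ n → a m * a n = 0) (T : Set ℕ) :
    dyadicSum a T * dyadicSum a Tᶜ = 0 := by
  rw [dyadicSum, ← (summable_dyadic ha T).tsum_mul_right]
  refine (tsum_congr fun m => ?_).trans tsum_zero
  by_cases hm : m ∈ T
  · rw [indicator_of_mem hm, dyadicSum, ← (summable_dyadic ha Tᶜ).tsum_mul_left]
    refine (tsum_congr fun n => ?_).trans tsum_zero
    by_cases hn : n ∈ Tᶜ
    · rw [indicator_of_mem hn, smul_mul_smul_comm, horth m n (fun h => hn (h ▸ hm)),
        smul_zero]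
    · rw [indicator_of_notMem hn, mul_zero]
  · rw [indicator_of_notMem hm, zero_mul]

variable {A : Type*} [CStarAlgebra A] [PartialOrder A] [StarOrderedRing A] {a : ℕ → A}

theorem dyadicSum_nonneg (ha : ∀ n, 0 ≤ a n) (T : Set ℕ) : 0 ≤ dyadicSum a T :=
  tsum_nonneg fun n => indicator_nonneg (fun m _ => smul_nonneg (by positivity) (ha m)) n

theorem IsState.apply_mul_dyadicSum_of_mem {φ : WeakDual ℂ A} (hφ : IsState φ)
    (ha₀ : ∀ n, 0 ≤ a n) (ha₁ : ∀ n, ‖a n‖ ≤ 1) {n : ℕ} (hn : φ (a n) = 1)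
    (hm : ∀ m, m ≠ n → φ (a m) = 0) {T : Set ℕ} (hnT : n ∈ T) (y : A) :
    φ (y * dyadicSum a T) = (2⁻¹ : ℝ) ^ n • φ y := by
  have hle (m : ℕ) : a m ≤ 1 := (CStarAlgebra.norm_le_one_iff_of_nonneg _ (ha₀ m)).mp (ha₁ m)
  rw [dyadicSum, ← (summable_dyadic ha₁ T).tsum_mul_left,
    (((summable_dyadic ha₁ T).mul_left y).hasSum.map φ (map_continuous φ)).tsum_eq.symm,
    tsum_eq_single n]
  · rw [Function.comp_apply, indicator_of_mem hnT, mul_smul_comm, ← Complex.coe_smul, map_smul,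
      hφ.apply_mul_eq_of_apply_eq_one (ha₀ n) (hle n) hn, Complex.coe_smul]
  · intro m hmn
    by_cases hmT : m ∈ T
    · rw [Function.comp_apply, indicator_of_mem hmT, mul_smul_comm, ← Complex.coe_smul, map_smul,
        hφ.apply_mul_eq_zero_of_apply_eq_zero (ha₀ m) (hle m) (hm m hmn), smul_zero]
    · rw [Function.comp_apply, indicator_of_notMem hmT, mul_zero, map_zero]

end DyadicSum

theorem isCompact_closure_of_forall_isState {A : Type*} [CStarAlgebra A] [PartialOrder A]
    [StarOrderedRing A] {s : Set (WeakDual ℂ A)} (hs : ∀ φ ∈ s, IsState φ) :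
    IsCompact (closure s) := by
  have hball := WeakDual.isCompact_closedBall (0 : StrongDual ℂ A) 4
  refine hball.of_isClosed_subset isClosed_closure
    (closure_minimal (fun φ hφ => ?_) hball.isClosed)
  simpa using (hs φ hφ).norm_toStrongDual_le

theorem IsSAWStar.exists_apply_eq_one_and_apply_eq_zero {A : Type*} [CStarAlgebra A]
    [PartialOrder A] [StarOrderedRing A] (hA : IsSAWStar A) {φ : ℕ → WeakDual ℂ A}
    (hφ : ∀ n, IsState (φ n)) {a : ℕ → A} (ha₀ : ∀ n, 0 ≤ a n) (ha₁ : ∀ n, ‖a n‖ ≤ 1)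
    (horth : ∀ m n, m ≠ n → a m * a n = 0) (heval : ∀ n, φ n (a n) = 1)
    (heval' : ∀ m n, m ≠ n → φ n (a m) = 0) (S : Set ℕ) :
    ∃ e : A, (∀ n ∈ S, φ n e = 1) ∧ ∀ n ∉ S, φ n e = 0 := by
  obtain ⟨e, -, heS, heSc⟩ := hA _ _ (dyadicSum_nonneg ha₀ S) (dyadicSum_nonneg ha₀ Sᶜ)
    (dyadicSum_mul_dyadicSum_compl ha₁ horth S)
  have happly {n : ℕ} {T : Set ℕ} (hnT : n ∈ T) (y : A) :
      φ n (y * dyadicSum a T) = (2⁻¹ : ℝ) ^ n • φ n y :=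
    (hφ n).apply_mul_dyadicSum_of_mem ha₀ ha₁ (heval n) (fun m hmn => heval' m n hmn) hnT y
  have hpow (n : ℕ) : (2⁻¹ : ℝ) ^ n ≠ 0 := by positivity
  refine ⟨e, fun n hn => ?_, fun n hn => ?_⟩
  · have h := happly hn e
    rw [heS, ← one_mul (dyadicSum a S), happly hn 1, (hφ n).1] at h
    exact (smul_right_injective ℂ (hpow n) h).symm
  · have h := happly (mem_compl hn) e
    rw [heSc, map_zero] at h
    exact (smul_eq_zero.mp h.symm).resolve_left (hpow n)

/-- Let `A` be a unital SAW*-algebra, `(φₙ)` states and `(aₙ)` pairwise orthogonal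
positive elements with `‖aₙ‖ = φₙ(aₙ) = 1` and `φₙ(aₘ) = 0` for `m ≠ n`.  Then the
weak*-closure of `{φₙ : n ∈ ℕ}` is homeomorphic to `βℕ`. -/
theorem sawstar_closure_homeomorphic_stoneCech
    {A : Type*} [NormedRing A] [StarRing A] [CStarRing A] [NormedAlgebra ℂ A]
    [StarModule ℂ A] [CompleteSpace A] [PartialOrder A] [StarOrderedRing A]
    (hA : IsSAWStar A)
    (φ : ℕ → WeakDual ℂ A) (hφ : ∀ n, IsState (φ n))
    (a : ℕ → A) (hpos : ∀ n, 0 ≤ a n)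
    (horth : ∀ m n, m ≠ n → a m * a n = 0)
    (hnorm : ∀ n, ‖a n‖ = 1)
    (heval : ∀ n, φ n (a n) = 1)
    (heval' : ∀ m n, m ≠ n → φ n (a m) = 0) :
    Nonempty (StoneCech ℕ ≃ₜ closure (Set.range φ)) := by
  let _ : CStarAlgebra A := { }
  have hK : IsCompact (closure (range φ)) :=
    isCompact_closure_of_forall_isState (forall_mem_range.mpr hφ)
  refine StoneCech.nonempty_homeomorph_closure_range continuous_of_discreteTopology hK fun S => ?_
  obtain ⟨e, he₁, he₀⟩ := hA.exists_apply_eq_one_and_apply_eq_zero hφ hpos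
    (fun n => (hnorm n).le) horth heval heval' S
  exact disjoint_closure_image_compl_of_continuous (WeakDual.eval_continuous e) one_ne_zero he₁ he₀
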